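/- Assume G₁ is invertible. Define θ : ℝ → ℝ^{1×n} by θ(x) = [−C_X, C_X·H₁·G₁^{-1}]·exp(F₁·x)·[I_n; 0], i.e., the row vector consisting of the first n entries of [−C_X, C_X·H₁·G₁^{-1}]·exp(F₁·x). Then θ is twice differentiable and satisfies the kernel boundary value problem: q·θ''(x) = θ(x)·A for all x ∈ ℝ, θ(0) = −C_X, and θ(1) = 0. -/

import Mathlib

open scoped Matrix

/-- The block matrix `F₁ = [[0, A/q],[I, 0]]`. -/
noncomputable def F1block (n : ℕ) (q : ℝ) (A : Matrix (Fin n) (Fin n) ℝ) :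
    Matrix (Fin n ⊕ Fin n) (Fin n ⊕ Fin n) ℝ :=
  Matrix.fromBlocks 0 (q⁻¹ • A) 1 0

/-- `G₁ = [0, I]·exp(F₁)·[I; 0]`, the lower-left `n×n` block of `exp F₁`. -/
noncomputable def G1block (n : ℕ) (q : ℝ) (A : Matrix (Fin n) (Fin n) ℝ) :
    Matrix (Fin n) (Fin n) ℝ :=
  (NormedSpace.exp (F1block n q A)).toBlocks₂₁

/-- `H₁ = [I, 0]·exp(F₁)·[I; 0]`, the upper-left `n×n` block of `exp F₁`. -/
noncomputable def H1block (n : ℕ) (q : ℝ) (A : Matrix (Fin n) (Fin n) ℝ) :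
    Matrix (Fin n) (Fin n) ℝ :=
  (NormedSpace.exp (F1block n q A)).toBlocks₁₁

/-!
Write `θ x = (v ᵥ* exp (x • F₁)) ∘ Sum.inl`. Since `F₁` commutes with `exp (x • F₁)`, each
differentiation replaces `v` by `v ᵥ* F₁`, and `F₁ * F₁ = diag (A/q, A/q)`, so `θ'' = θ ᵥ* (A/q)`.
At `x = 0` the exponential is `1`; at `x = 1` the first block of `v ᵥ* exp F₁` is
`-C_X H₁ + C_X H₁ G₁⁻¹ G₁ = 0`.
-/

section ExpKernel

variable {α β : Type*} [Fintype α] [Fintype β] [DecidableEq α] [DecidableEq β]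

noncomputable def expKernel (F : Matrix (α ⊕ β) (α ⊕ β) ℝ) (w : α ⊕ β → ℝ) (x : ℝ) : α → ℝ :=
  fun j => (w ᵥ* NormedSpace.exp (x • F)) (Sum.inl j)

theorem hasDerivAt_vecMul_exp_smul {ι : Type*} [Fintype ι] [DecidableEq ι]
    (F : Matrix ι ι ℝ) (w : ι → ℝ) (x : ℝ) :
    HasDerivAt (fun t => w ᵥ* NormedSpace.exp (t • F))
      ((w ᵥ* F) ᵥ* NormedSpace.exp (x • F)) x := by
  -- `NormedSpace.exp` only depends on the topology, so any normed-algebra structure will do.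
  let := Matrix.linftyOpNormedRing (n := ι) (α := ℝ)
  let := Matrix.linftyOpNormedAlgebra (n := ι) (R := ℝ) (α := ℝ)
  rw [Matrix.vecMul_vecMul]
  exact (LinearMap.toContinuousLinearMap (Matrix.vecMulBilin ℝ ℝ w)).hasFDerivAt.comp_hasDerivAt x
    (hasDerivAt_exp_smul_const' F x)

theorem hasDerivAt_expKernel (F : Matrix (α ⊕ β) (α ⊕ β) ℝ) (w : α ⊕ β → ℝ) (x : ℝ) :
    HasDerivAt (expKernel F w) (expKernel F (w ᵥ* F) x) x :=
  hasDerivAt_pi.2 fun j => hasDerivAt_pi.1 (hasDerivAt_vecMul_exp_smul F w x) (Sum.inl j)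

theorem deriv_expKernel (F : Matrix (α ⊕ β) (α ⊕ β) ℝ) (w : α ⊕ β → ℝ) :
    deriv (expKernel F w) = expKernel F (w ᵥ* F) :=
  funext fun x => (hasDerivAt_expKernel F w x).deriv

theorem differentiable_expKernel (F : Matrix (α ⊕ β) (α ⊕ β) ℝ) (w : α ⊕ β → ℝ) :
    Differentiable ℝ (expKernel F w) :=
  fun x => (hasDerivAt_expKernel F w x).differentiableAt

theorem expKernel_vecMul_fromBlocks_diag {F : Matrix (α ⊕ β) (α ⊕ β) ℝ} {B : Matrix α α ℝ}
    {D : Matrix β β ℝ} (hF : Commute F (Matrix.fromBlocks B 0 0 D)) (w : α ⊕ β → ℝ) (x : ℝ) :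
    expKernel F (w ᵥ* Matrix.fromBlocks B 0 0 D) x = expKernel F w x ᵥ* B := by
  have hexp : Commute (Matrix.fromBlocks B 0 0 D) (NormedSpace.exp (x • F)) :=
    (hF.symm.smul_right x).exp_right
  funext j
  rw [expKernel, Matrix.vecMul_vecMul, hexp.eq, ← Matrix.vecMul_vecMul, Matrix.vecMul_fromBlocks]
  simp only [Sum.elim_inl, Matrix.vecMul_zero, add_zero]
  rfl

theorem expKernel_zero (F : Matrix (α ⊕ β) (α ⊕ β) ℝ) (w : α ⊕ β → ℝ) :
    expKernel F w 0 = w ∘ Sum.inl := by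
  funext j
  simp [expKernel]

theorem expKernel_one (F : Matrix (α ⊕ β) (α ⊕ β) ℝ) (w : α ⊕ β → ℝ) :
    expKernel F w 1 = (w ∘ Sum.inl) ᵥ* (NormedSpace.exp F).toBlocks₁₁
      + (w ∘ Sum.inr) ᵥ* (NormedSpace.exp F).toBlocks₂₁ := by
  unfold expKernel
  rw [one_smul, ← Matrix.fromBlocks_toBlocks (NormedSpace.exp F), Matrix.vecMul_fromBlocks]
  rfl

end ExpKernel

theorem F1block_mul_self (n : ℕ) (q : ℝ) (A : Matrix (Fin n) (Fin n) ℝ) :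
    F1block n q A * F1block n q A = Matrix.fromBlocks (q⁻¹ • A) 0 0 (q⁻¹ • A) := by
  simp [F1block, Matrix.fromBlocks_multiply]

theorem stmt5_general
    (n : ℕ)
    (A : Matrix (Fin n) (Fin n) ℝ) (CX : Fin n → ℝ)
    (q : ℝ) (hq : q ≠ 0)
    (hG1 : IsUnit (G1block n q A).det)
    (θ : ℝ → Fin n → ℝ)
    (hθ : θ = fun x => fun j =>
      (Sum.elim (-CX) (CX ᵥ* (H1block n q A * (G1block n q A)⁻¹))
        ᵥ* NormedSpace.exp (x • F1block n q A)) (Sum.inl j)) :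
    (Differentiable ℝ θ ∧ Differentiable ℝ (deriv θ))
    ∧ (∀ x : ℝ, q • deriv (deriv θ) x = θ x ᵥ* A)
    ∧ θ 0 = -CX
    ∧ θ 1 = 0 := by
  set F := F1block n q A
  set v := Sum.elim (-CX) (CX ᵥ* (H1block n q A * (G1block n q A)⁻¹))
  replace hθ : θ = expKernel F v := hθ
  have hθ' : deriv θ = expKernel F (v ᵥ* F) := by rw [hθ, deriv_expKernel]
  have hθ'' : deriv (deriv θ) = expKernel F (v ᵥ* (F * F)) := by
    rw [hθ', deriv_expKernel, Matrix.vecMul_vecMul]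
  have hF : Commute F (Matrix.fromBlocks (q⁻¹ • A) 0 0 (q⁻¹ • A)) :=
    F1block_mul_self n q A ▸ (Commute.refl F).mul_right (Commute.refl F)
  refine ⟨⟨hθ ▸ differentiable_expKernel F v, hθ' ▸ differentiable_expKernel F _⟩,
    fun x => ?_, ?_, ?_⟩
  · rw [hθ'', F1block_mul_self, expKernel_vecMul_fromBlocks_diag hF, ← hθ, Matrix.vecMul_smul,
      smul_smul, mul_inv_cancel₀ hq, one_smul]
  · rw [hθ, expKernel_zero, Sum.elim_comp_inl]
  · rw [hθ, expKernel_one, Sum.elim_comp_inl, Sum.elim_comp_inr]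
    change (-CX) ᵥ* H1block n q A
      + (CX ᵥ* (H1block n q A * (G1block n q A)⁻¹)) ᵥ* G1block n q A = 0
    rw [Matrix.vecMul_vecMul, Matrix.mul_assoc, Matrix.nonsing_inv_mul _ hG1, Matrix.mul_one,
      Matrix.neg_vecMul, neg_add_cancel]

/-- the explicit kernel
`θ(x) = [−C_X, C_X·H₁·G₁⁻¹]·exp(F₁x)·[I; 0]` is twice differentiable and solves
`q·θ'' = θ·A`, `θ(0) = −C_X`, `θ(1) = 0`. -/
theorem stmt5
    (n : ℕ) (hn : 1 ≤ n)
    (A : Matrix (Fin n) (Fin n) ℝ) (CX : Fin n → ℝ)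
    (q : ℝ) (hq : q ≠ 0)
    (hG1 : IsUnit (G1block n q A).det)
    (θ : ℝ → Fin n → ℝ)
    (hθ : θ = fun x => fun j =>
      (Sum.elim (-CX) (CX ᵥ* (H1block n q A * (G1block n q A)⁻¹))
        ᵥ* NormedSpace.exp (x • F1block n q A)) (Sum.inl j)) :
    (Differentiable ℝ θ ∧ Differentiable ℝ (deriv θ))
    ∧ (∀ x : ℝ, q • deriv (deriv θ) x = θ x ᵥ* A)
    ∧ θ 0 = -CX
    ∧ θ 1 = 0 :=
  stmt5_general n A CX q hq hG1 θ hθ
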